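/- Let T² act on ℂ⁴ by ((s,t), z) ↦ (s^m t z₁, t z₂, s z₃, s z₄) with |s| = |t| = 1 for a fixed positive integer m, and let μ(z) = ½(m|z₁|² + |z₃|² + |z₄|², |z₁|² + |z₂|²). Then for real r with r ≠ 0 and r ≠ m, the point (r, 1) is a regular value of μ: at every z ∈ μ^{-1}(r,1), the differential dμ_z : ℂ⁴ → ℝ² is surjective. -/

import Mathlib

noncomputable def mu13 (m : ℕ) (z : Fin 4 → ℂ) : ℝ × ℝ :=
  ((1 / 2 : ℝ) * ((m : ℝ) * ‖z 0‖ ^ 2 + ‖z 2‖ ^ 2 + ‖z 3‖ ^ 2),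
   (1 / 2 : ℝ) * (‖z 0‖ ^ 2 + ‖z 1‖ ^ 2))

/-!
The image of `dμ_z` contains `dμ_z (z_i e_i) = |z_i|² w_i`, where `w_i` is the weight
`(m, 1), (0, 1), (1, 0), (1, 0)` of the `i`-th coordinate (indices `0, …, 3` in Lean).
If a functional `(α, β)` annihilates the image, then `|z_i|² ⟨(α, β), w_i⟩ = 0` for every `i`;
summing and using `μ(z) = (r, 1)` gives `β = -α r`. If `α ≠ 0`, then also `β ≠ 0` (as `r ≠ 0`),
so `z_1 = z_2 = z_3 = 0`, and then `μ(z) = (m, 1)`, contradicting `r ≠ m`.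
-/

open scoped RealInnerProductSpace

theorem LinearMap.surjective_prod_of_annihilator_eq_zero {K E : Type*} [Field K]
    [AddCommGroup E] [Module K E] (L : E →ₗ[K] K × K)
    (h : ∀ α β : K, (∀ w, α * (L w).1 + β * (L w).2 = 0) → α = 0 ∧ β = 0) :
    Function.Surjective L := by
  rw [← LinearMap.range_eq_top, ← Submodule.dualAnnihilator_eq_bot_iff, Submodule.eq_bot_iff]
  intro φ hφ
  have hφ_apply (p : K × K) : φ p = φ (1, 0) * p.1 + φ (0, 1) * p.2 := by
    conv_lhs => rw [show p = p.1 • (1, 0) + p.2 • (0, 1) by ext <;> simp]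
    rw [map_add, map_smul, map_smul, smul_eq_mul, smul_eq_mul, mul_comm, mul_comm p.2]
  obtain ⟨h1, h2⟩ := h (φ (1, 0)) (φ (0, 1)) fun w => by
    rw [← hφ_apply]
    exact (Submodule.mem_dualAnnihilator φ).1 hφ _ (LinearMap.mem_range_self L w)
  exact LinearMap.prod_ext (LinearMap.ext_ring (by simpa using h1))
    (LinearMap.ext_ring (by simpa using h2))

theorem fderiv_mu13_apply (m : ℕ) (z w : Fin 4 → ℂ) :
    fderiv ℝ (mu13 m) z w =
      (m * ⟪z 0, w 0⟫ + ⟪z 2, w 2⟫ + ⟪z 3, w 3⟫, ⟪z 0, w 0⟫ + ⟪z 1, w 1⟫) := by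
  have hsq (i : Fin 4) := (hasFDerivAt_apply i z).norm_sq
  have h : HasFDerivAt (mu13 m) _ z :=
    ((((hsq 0).const_mul (m : ℝ)).add (hsq 2)).add (hsq 3) |>.const_mul (1 / 2 : ℝ)).prodMk
      (((hsq 0).add (hsq 1)).const_mul (1 / 2 : ℝ))
  rw [h.fderiv]
  simp only [ContinuousLinearMap.prod_apply, add_apply, smul_apply,
    ContinuousLinearMap.comp_apply, ContinuousLinearMap.proj_apply, coe_innerSL_apply,
    smul_eq_mul, nsmul_eq_mul, Nat.cast_ofNat]
  ext <;> ring

theorem stmt_13_general (m : ℕ) (r : ℝ) (hr0 : r ≠ 0) (hrm : r ≠ (m : ℝ))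
    (z : Fin 4 → ℂ) (hz : mu13 m z = (r, 1)) :
    Function.Surjective (fderiv ℝ (mu13 m) z) := by
  obtain ⟨hr, h1⟩ := Prod.mk.inj hz
  refine (fderiv ℝ (mu13 m) z : (Fin 4 → ℂ) →ₗ[ℝ] ℝ × ℝ).surjective_prod_of_annihilator_eq_zero
    fun α β hαβ => ?_
  have e0 := hαβ (Pi.single 0 (z 0))
  have e1 := hαβ (Pi.single 1 (z 1))
  have e2 := hαβ (Pi.single 2 (z 2))
  have e3 := hαβ (Pi.single 3 (z 3))
  simp only [ContinuousLinearMap.coe_coe, fderiv_mu13_apply, Pi.single_apply, Fin.isValue,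
    Fin.reduceEq, if_true, if_false, inner_zero_right, real_inner_self_eq_norm_sq] at e0 e1 e2 e3
  have hβ : β = -(α * r) := by
    linear_combination (e0 + e1 + e2 + e3) / 2 - α * hr - β * h1
  have hα : α = 0 := by
    by_contra hα
    have hz1 : ‖z 1‖ ^ 2 = 0 := by simpa [hβ, hα, hr0] using e1
    have hz2 : ‖z 2‖ ^ 2 = 0 := by simpa [hα] using e2
    have hz3 : ‖z 3‖ ^ 2 = 0 := by simpa [hα] using e3
    rw [hz2, hz3] at hr
    rw [hz1] at h1
    exact hrm (by linear_combination -hr + m * h1)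
  exact ⟨hα, by simpa [hα] using hβ⟩

theorem stmt_13 (m : ℕ) (hm : 0 < m) (r : ℝ) (hr0 : r ≠ 0) (hrm : r ≠ (m : ℝ))
    (z : Fin 4 → ℂ) (hz : mu13 m z = (r, 1)) :
    Function.Surjective (fderiv ℝ (mu13 m) z) :=
  stmt_13_general m r hr0 hrm z hz
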